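/- Let K be a field of characteristic 0, σ the K-algebra automorphism of K(X) with σ(f)(X) = f(X+1), B a vector space over K(X), and S : B → B an additive map satisfying S(f•v) = σ(f)•S(v) for all f ∈ K(X), v ∈ B. Let γ ∈ B and r ≥ 1, and assume: (i) B is spanned over K(X) by {S^i(γ) : i ∈ ℕ}; (ii) there are a_0,…,a_r ∈ K(X) with a_r ≠ 0 and ∑_{i=0}^r a_i • S^i(γ) = 0; (iii) minimality: whenever c_0,…,c_{r−1} ∈ K(X) satisfy ∑_{i=0}^{r−1} c_i • S^i(γ) = 0, all c_i = 0. Then for every R ∈ K(X) the following are equivalent: (a) there exists w ∈ B with R•γ = S(w) − w; (b) there exists u ∈ K(X) with R = ∑_{i=0}^r σ^{−i}(a_i · u). -/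

import Mathlib

section Aux

variable {K : Type*} [Field K]

private lemma sigma_zpow_succ (σ : RatFunc K ≃ₐ[K] RatFunc K) (k : ℤ) (x : RatFunc K) :
    σ ((σ ^ k) x) = (σ ^ (k + 1)) x := by
  rw [show k + 1 = 1 + k by ring, zpow_add, zpow_one]; rfl

private lemma zpow_succ_apply' (σ : RatFunc K ≃ₐ[K] RatFunc K) (k : ℤ) (x : RatFunc K) :
    (σ ^ (k + 1)) x = (σ ^ k) (σ x) := by
  rw [zpow_add_one]; rfl

variable {B : Type*} [AddCommGroup B] [Module (RatFunc K) B] {S : B → B}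

private lemma S_zero (hS_add : ∀ x y : B, S (x + y) = S x + S y) : S 0 = 0 := by
  have h := hS_add 0 0
  rw [add_zero] at h
  exact (add_eq_left.mp h.symm)

private lemma S_sum (hS_add : ∀ x y : B, S (x + y) = S x + S y)
    {ι : Type*} (s : Finset ι) (f : ι → B) :
    S (∑ i ∈ s, f i) = ∑ i ∈ s, S (f i) := by
  classical
  induction s using Finset.induction_on with
  | empty => simpa using S_zero hS_add
  | insert _ _ h ih => rw [Finset.sum_insert h, Finset.sum_insert h, hS_add, ih]

private lemma S_neg (hS_add : ∀ x y : B, S (x + y) = S x + S y) (x : B) : S (-x) = -S x := by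
  have h := hS_add x (-x)
  rw [add_neg_cancel, S_zero hS_add] at h
  exact (neg_eq_of_add_eq_zero_right h.symm).symm

end Aux

/-- Telescoping criterion (Proposition `propCT2`): with `γ` a cyclic vector with respect to
the shift-semilinear map `S`, annihilated by the minimal-order operator `L = ∑ a_i S^i`,
a rational function `R` satisfies `R•γ ∈ (S − 1)(B)` iff `R` lies in the image of the
adjoint `L*`, i.e. `R = ∑_{i=0}^r σ^{−i}(a_i · u)` for some rational function `u`. -/
theorem telescoping_iff_adjoint_image (K : Type*) [Field K] [CharZero K]
    (σ : RatFunc K ≃ₐ[K] RatFunc K) (hσ : σ RatFunc.X = RatFunc.X + 1)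
    (B : Type*) [AddCommGroup B] [Module (RatFunc K) B]
    (S : B → B)
    (hS_add : ∀ x y : B, S (x + y) = S x + S y)
    (hS_smul : ∀ (f : RatFunc K) (w : B), S (f • w) = σ f • S w)
    (γ : B) (r : ℕ) (hr : 1 ≤ r)
    (hspan : Submodule.span (RatFunc K) (Set.range fun i : ℕ => S^[i] γ) = ⊤)
    (a : ℕ → RatFunc K) (har : a r ≠ 0)
    (hrel : ∑ i ∈ Finset.range (r + 1), a i • S^[i] γ = 0)
    (hmin : ∀ c : ℕ → RatFunc K,
      (∑ i ∈ Finset.range r, c i • S^[i] γ = 0) → ∀ i < r, c i = 0)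
    (R : RatFunc K) :
    (∃ w : B, R • γ = S w - w) ↔
      (∃ u : RatFunc K,
        R = ∑ i ∈ Finset.range (r + 1), (σ ^ (-(i : ℤ))) (a i * u)) := by
  constructor
  · -- (a) → (b)
    rintro ⟨w, hw⟩
    classical
    obtain ⟨m, rfl⟩ : ∃ m, r = m + 1 := ⟨r - 1, (Nat.succ_pred_eq_of_pos hr).symm⟩
    set M : Submodule (RatFunc K) B :=
      Submodule.span (RatFunc K) (Set.range fun j : Fin (m + 1) => S^[(j : ℕ)] γ) with hM
    have hmemM : ∀ j, ∀ h : j < m + 1, S^[j] γ ∈ M := fun j h =>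
      Submodule.subset_span ⟨⟨j, h⟩, rfl⟩
    have hSr : S^[m + 1] γ ∈ M := by
      have h1 : ∑ i ∈ Finset.range (m + 1), a i • S^[i] γ + a (m + 1) • S^[m + 1] γ = 0 := by
        rw [← Finset.sum_range_succ]; exact hrel
      have h2 : S^[m + 1] γ = (a (m + 1))⁻¹ • (-∑ i ∈ Finset.range (m + 1), a i • S^[i] γ) := by
        rw [← (eq_neg_of_add_eq_zero_right h1), ← mul_smul, inv_mul_cancel₀ har, one_smul]
      rw [h2]
      exact Submodule.smul_mem _ _ (Submodule.neg_mem _ (Submodule.sum_mem _ fun i hi =>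
        Submodule.smul_mem _ _ (hmemM i (Finset.mem_range.mp hi))))
    have hSmaps : ∀ v ∈ M, S v ∈ M := by
      intro v hv
      induction hv using Submodule.span_induction with
      | mem x hx =>
        obtain ⟨⟨j, hj⟩, rfl⟩ := hx
        show S (S^[(j : ℕ)] γ) ∈ M
        rw [← Function.iterate_succ_apply' S j γ]
        rcases lt_or_eq_of_le (Nat.succ_le_of_lt hj) with h | h
        · exact hmemM _ h
        · rw [h]; exact hSr
      | zero => rw [S_zero hS_add]; exact Submodule.zero_mem _
      | add x y hx hy ihx ihy => rw [hS_add]; exact Submodule.add_mem _ ihx ihy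
      | smul c x hx ih => rw [hS_smul]; exact Submodule.smul_mem _ _ ih
    have hall : ∀ i : ℕ, S^[i] γ ∈ M := by
      intro i
      induction i with
      | zero => exact hmemM 0 (Nat.succ_pos m)
      | succ n ih => rw [Function.iterate_succ_apply']; exact hSmaps _ ih
    have hMtop : M = ⊤ := by
      rw [eq_top_iff, ← hspan, Submodule.span_le]
      rintro x ⟨i, rfl⟩
      exact hall i
    have hwM : w ∈ M := by rw [hMtop]; exact Submodule.mem_top
    obtain ⟨cf, hcf⟩ := (Submodule.mem_span_range_iff_exists_fun (RatFunc K)).mp hwM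
    set c : ℕ → RatFunc K := fun n => if h : n < m + 1 then cf ⟨n, h⟩ else 0 with hcdef
    have hwc : ∑ j ∈ Finset.range (m + 1), c j • S^[j] γ = w := by
      rw [← hcf, Finset.sum_range]
      exact Finset.sum_congr rfl fun i _ => by
        simp only [hcdef, i.isLt, dif_pos, Fin.eta]
    have hSw : S w = ∑ j ∈ Finset.range (m + 1), σ (c j) • S^[j + 1] γ := by
      rw [← hwc, S_sum hS_add]
      exact Finset.sum_congr rfl fun j _ => by
        rw [hS_smul, Function.iterate_succ_apply']
    obtain ⟨u, hua⟩ : ∃ u : RatFunc K, u * a (m + 1) = -σ (c m) :=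
      ⟨-σ (c m) / a (m + 1), div_mul_cancel₀ _ har⟩
    have hesum : ∑ j ∈ Finset.range (m + 1),
        ((if j = 0 then -R else σ (c (j - 1))) + u * a j - c j) • S^[j] γ = 0 := by
      have expand : ∑ j ∈ Finset.range (m + 1),
          ((if j = 0 then -R else σ (c (j - 1))) + u * a j - c j) • S^[j] γ
          = (∑ j ∈ Finset.range (m + 1), (if j = 0 then -R else σ (c (j - 1))) • S^[j] γ)
            + (∑ j ∈ Finset.range (m + 1), (u * a j) • S^[j] γ)
            - ∑ j ∈ Finset.range (m + 1), c j • S^[j] γ := by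
        simp only [sub_smul, add_smul]
        rw [Finset.sum_sub_distrib, Finset.sum_add_distrib]
      have hA : ∑ j ∈ Finset.range (m + 1), (if j = 0 then -R else σ (c (j - 1))) • S^[j] γ
          = ∑ j ∈ Finset.range m, σ (c j) • S^[j + 1] γ + (-R) • γ := by
        rw [Finset.sum_range_succ']
        simp
      have h1 : ∑ j ∈ Finset.range (m + 1), a j • S^[j] γ = -(a (m + 1) • S^[m + 1] γ) := by
        exact eq_neg_of_add_eq_zero_left (by rw [← Finset.sum_range_succ]; exact hrel)
      have hB : ∑ j ∈ Finset.range (m + 1), (u * a j) • S^[j] γ = σ (c m) • S^[m + 1] γ := by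
        calc ∑ j ∈ Finset.range (m + 1), (u * a j) • S^[j] γ
            = u • ∑ j ∈ Finset.range (m + 1), a j • S^[j] γ := by
              rw [Finset.smul_sum]
              exact Finset.sum_congr rfl fun j _ => mul_smul u (a j) _
          _ = σ (c m) • S^[m + 1] γ := by
              rw [h1, smul_neg, smul_smul, hua, neg_smul, neg_neg]
      have hSw' : ∑ j ∈ Finset.range m, σ (c j) • S^[j + 1] γ + σ (c m) • S^[m + 1] γ
          = S w := by rw [hSw, Finset.sum_range_succ]
      rw [expand, hA, hB, hwc]
      calc (∑ j ∈ Finset.range m, σ (c j) • S^[j + 1] γ + (-R) • γ)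
            + σ (c m) • S^[m + 1] γ - w
          = (∑ j ∈ Finset.range m, σ (c j) • S^[j + 1] γ + σ (c m) • S^[m + 1] γ)
            - w - R • γ := by rw [neg_smul]; abel
        _ = (S w - w) - R • γ := by rw [hSw']
        _ = 0 := by rw [← hw, sub_self]
    have hezero := hmin
      (fun j => (if j = 0 then -R else σ (c (j - 1))) + u * a j - c j) hesum
    have hc0 : c 0 = -R + u * a 0 := by
      have h0 := hezero 0 (Nat.succ_pos m)
      simp only [reduceIte] at h0
      linear_combination -h0
    have hcstep' : ∀ j < m, c (j + 1) = σ (c j) + u * a (j + 1) := by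
      intro j hj
      have h1 := hezero (j + 1) (by omega)
      simp only [Nat.succ_ne_zero, if_false, Nat.add_sub_cancel] at h1
      linear_combination -h1
    have key : ∀ j ≤ m, (σ ^ (-(j : ℤ))) (c j)
        = ∑ i ∈ Finset.range (j + 1), (σ ^ (-(i : ℤ))) (a i * u) - R := by
      intro j hj
      induction j with
      | zero =>
        simp only [Nat.cast_zero, neg_zero, zpow_zero, AlgEquiv.one_apply, zero_add,
          Finset.range_one, Finset.sum_singleton, hc0]
        ring
      | succ n ih =>
        have hcn := hcstep' n (by omega)
        have hcast : -(((n : ℕ) + 1 : ℕ) : ℤ) = -(n : ℤ) - 1 := by push_cast; ring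
        have hσ1 : ∀ x : RatFunc K, (σ ^ (-(((n : ℕ) + 1 : ℕ) : ℤ))) (σ x)
            = (σ ^ (-(n : ℤ))) x := by
          intro x
          rw [hcast, ← zpow_succ_apply']
          norm_num
        calc (σ ^ (-(((n : ℕ) + 1 : ℕ) : ℤ))) (c (n + 1))
            = (σ ^ (-(n : ℤ))) (c n) + (σ ^ (-(((n : ℕ) + 1 : ℕ) : ℤ))) (u * a (n + 1)) := by
              rw [hcn, map_add, hσ1]
          _ = (∑ i ∈ Finset.range (n + 1), (σ ^ (-(i : ℤ))) (a i * u) - R)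
              + (σ ^ (-(((n : ℕ) + 1 : ℕ) : ℤ))) (a (n + 1) * u) := by
              rw [ih (by omega), mul_comm]
          _ = ∑ i ∈ Finset.range (n + 1 + 1), (σ ^ (-(i : ℤ))) (a i * u) - R := by
              conv_rhs => rw [Finset.sum_range_succ]
              abel
    refine ⟨u, ?_⟩
    have hk := key m le_rfl
    have h3 : σ (c m) = -(u * a (m + 1)) := by linear_combination hua
    have hcast : -(((m : ℕ) + 1 : ℕ) : ℤ) = -(m : ℤ) - 1 := by push_cast; ring
    have hlast : (σ ^ (-(m : ℤ))) (c m)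
        = -((σ ^ (-(((m : ℕ) + 1 : ℕ) : ℤ))) (a (m + 1) * u)) := by
      have h4 : (σ ^ (-(((m : ℕ) + 1 : ℕ) : ℤ))) (σ (c m)) = (σ ^ (-(m : ℤ))) (c m) := by
        rw [hcast, ← zpow_succ_apply']
        norm_num
      rw [← h4, h3, map_neg, mul_comm]
    rw [Finset.sum_range_succ]
    linear_combination hk - hlast
  · -- (b) → (a)
    rintro ⟨u, rfl⟩
    classical
    set P : B := ∑ i ∈ Finset.range (r + 1), ∑ j ∈ Finset.range i,
        ((σ ^ ((j : ℤ) - (i : ℤ))) (a i * u)) • S^[j] γ with hP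
    refine ⟨-P, ?_⟩
    have hSP : S P = ∑ i ∈ Finset.range (r + 1), ∑ j ∈ Finset.range i,
        ((σ ^ ((((j : ℕ) + 1 : ℕ) : ℤ) - (i : ℤ))) (a i * u)) • S^[j + 1] γ := by
      rw [hP, S_sum hS_add]
      refine Finset.sum_congr rfl fun i _ => ?_
      rw [S_sum hS_add]
      refine Finset.sum_congr rfl fun j _ => ?_
      rw [hS_smul, sigma_zpow_succ, Function.iterate_succ_apply']
      congr 2
      push_cast; ring
    have htel : S P - P = ∑ i ∈ Finset.range (r + 1),
        ((a i * u) • S^[i] γ - ((σ ^ (-(i : ℤ))) (a i * u)) • γ) := by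
      rw [hSP, hP, ← Finset.sum_sub_distrib]
      refine Finset.sum_congr rfl fun i _ => ?_
      rw [← Finset.sum_sub_distrib]
      have hkey := Finset.sum_range_sub
        (fun j => ((σ ^ ((j : ℤ) - (i : ℤ))) (a i * u)) • S^[j] γ) i
      rw [hkey]
      congr 1
      · congr 1
        simp [sub_self]
      · congr 2
        simp
    have hzero : ∑ i ∈ Finset.range (r + 1), (a i * u) • S^[i] γ = 0 := by
      calc ∑ i ∈ Finset.range (r + 1), (a i * u) • S^[i] γ
          = u • ∑ i ∈ Finset.range (r + 1), a i • S^[i] γ := by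
            rw [Finset.smul_sum]
            exact Finset.sum_congr rfl fun i _ => by rw [mul_comm, mul_smul]
        _ = 0 := by rw [hrel, smul_zero]
    have htot : S P - P = -((∑ i ∈ Finset.range (r + 1), (σ ^ (-(i : ℤ))) (a i * u)) • γ) := by
      rw [htel, Finset.sum_sub_distrib, hzero, zero_sub, Finset.sum_smul]
    rw [S_neg hS_add]
    have : (∑ i ∈ Finset.range (r + 1), (σ ^ (-(i : ℤ))) (a i * u)) • γ = -(S P - P) := by
      rw [htot, neg_neg]
    rw [this]
    abel
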